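/- Uniqueness of the periodic heat equation: if G is continuous on [−π,π] × ℝ_{≥0}, smooth in x for each t > 0 and in (x,t) on the interior, 2π-periodic in x, satisfies ∂G/∂t = ∂²G/∂x² for t > 0, and G(·,0) = g, then the Fourier coefficients satisfy Ĝ(m,t) = e^{−m²t} ĝ(m) for all m ∈ ℤ and t ≥ 0; in particular G is uniquely determined by g. -/

import Mathlib

open Real Complex
open scoped BigOperators

/-- The `m`-th Fourier coefficient of a `2π`-periodic function `h : ℝ → ℂ`. -/
noncomputable def fourierCoeffPi (h : ℝ → ℂ) (m : ℤ) : ℂ :=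
  (1 / (2 * (π : ℂ))) * ∫ x in (-π)..π, h x * Complex.exp (-Complex.I * m * x)

lemma heatAux_ibp (m : ℤ) (u : ℝ → ℂ) (hu : ContDiff ℝ (⊤ : ℕ∞) u)
    (huper : Function.Periodic u (2 * π)) :
    ∫ x in (-π)..π, iteratedDeriv 2 u x * Complex.exp (-Complex.I * m * x) =
      (-(m : ℂ) ^ 2) * ∫ x in (-π)..π, u x * Complex.exp (-Complex.I * m * x) := by
  set e : ℝ → ℂ := fun x => Complex.exp (-Complex.I * m * x) with he_def
  have he_deriv : ∀ x : ℝ, HasDerivAt e ((-Complex.I * m) * e x) x := by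
    intro x
    have h1 : HasDerivAt (fun x : ℝ => -Complex.I * m * x) (-Complex.I * m) x := by
      simpa using (Complex.ofRealCLM.hasDerivAt (x := x)).const_mul (-Complex.I * m)
    simpa [he_def, mul_comm] using h1.cexp
  have he_cont : Continuous e := by
    apply Complex.continuous_exp.comp; fun_prop
  have he_per : e π = e (-π) := by
    show Complex.exp (-Complex.I * m * (π:ℝ)) = Complex.exp (-Complex.I * m * ((-π:ℝ)))
    push_cast
    rw [Complex.exp_eq_exp_iff_exists_int]
    exact ⟨-m, by push_cast; ring⟩
  have hd1 : Differentiable ℝ (deriv u) := by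
    have h := hu.differentiable_iteratedDeriv 1 (by exact_mod_cast lt_top_iff_ne_top.2 (by simp))
    rwa [iteratedDeriv_one] at h
  have hdper : Function.Periodic (deriv u) (2 * π) := by
    intro x
    rw [← deriv_comp_add_const, huper.funext]
  have hudiff : ∀ x : ℝ, HasDerivAt u (deriv u x) x :=
    fun x => (hu.differentiable (by simp) x).hasDerivAt
  have hudiff1 : ∀ x : ℝ, HasDerivAt (deriv u) (deriv (deriv u) x) x :=
    fun x => (hd1 x).hasDerivAt
  have h2eq : iteratedDeriv 2 u = deriv (deriv u) := by
    rw [iteratedDeriv_succ, iteratedDeriv_one]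
  have hbd : deriv u π = deriv u (-π) := by
    have := hdper (-π); rw [show -π + 2 * π = π by ring] at this; exact this.symm ▸ rfl
  have hbu : u π = u (-π) := by
    have := huper (-π); rw [show -π + 2 * π = π by ring] at this; exact this.symm ▸ rfl
  have ibp1 : ∫ x in (-π)..π, e x * deriv (deriv u) x =
      e π * deriv u π - e (-π) * deriv u (-π)
        - ∫ x in (-π)..π, ((-Complex.I * m) * e x) * deriv u x := by
    apply intervalIntegral.integral_mul_deriv_eq_deriv_mul
    · exact fun x _ => he_deriv x
    · exact fun x _ => hudiff1 x
    · exact ((continuous_const.mul he_cont).intervalIntegrable _ _)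
    · have hc2 : Continuous (deriv (deriv u)) := by
        have := hu.continuous_iteratedDeriv 2 (WithTop.coe_le_coe.2 le_top)
        rwa [iteratedDeriv_succ, iteratedDeriv_one] at this
      exact (hc2.intervalIntegrable _ _)
  have ibp2 : ∫ x in (-π)..π, e x * deriv u x =
      e π * u π - e (-π) * u (-π)
        - ∫ x in (-π)..π, ((-Complex.I * m) * e x) * u x := by
    apply intervalIntegral.integral_mul_deriv_eq_deriv_mul
    · exact fun x _ => he_deriv x
    · exact fun x _ => hudiff x
    · exact ((continuous_const.mul he_cont).intervalIntegrable _ _)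
    · have hc : Continuous (deriv u) := hd1.continuous
      exact (hc.intervalIntegrable _ _)
  have hconst1 : ∫ x in (-π)..π, ((-Complex.I * m) * e x) * deriv u x =
      (-Complex.I * m) * ∫ x in (-π)..π, e x * deriv u x := by
    rw [← intervalIntegral.integral_const_mul]
    congr 1; ext x; ring
  have hconst2 : ∫ x in (-π)..π, ((-Complex.I * m) * e x) * u x =
      (-Complex.I * m) * ∫ x in (-π)..π, e x * u x := by
    rw [← intervalIntegral.integral_const_mul]
    congr 1; ext x; ring
  have hcomm : ∫ x in (-π)..π, iteratedDeriv 2 u x * e x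
      = ∫ x in (-π)..π, e x * deriv (deriv u) x := by
    rw [h2eq]; congr 1; ext x; ring
  have hcomm2 : ∫ x in (-π)..π, u x * e x = ∫ x in (-π)..π, e x * u x := by
    congr 1; ext x; ring
  rw [hcomm, hcomm2, ibp1, hconst1, ibp2, hconst2, he_per, hbd, hbu]
  set A := ∫ x in (-π)..π, e x * u x
  have : (Complex.I * m) * (Complex.I * m) = -(m:ℂ)^2 := by
    rw [show Complex.I * m * (Complex.I * m) = Complex.I^2 * m^2 by ring, Complex.I_sq]; ring
  ring_nf
  rw [Complex.I_sq]
  ring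

/-- Theorem (uniqueness for the periodic heat equation): if `G` is continuous on
`ℝ × [0,∞)`, smooth in `x` for `t > 0`, smooth in `(x,t)` on the interior, `2π`-periodic
in `x`, satisfies the heat equation for `t > 0`, and has initial condition `g`, then its
spatial Fourier coefficients are `Ĝ(m,t) = e^{-m²t} ĝ(m)`; in particular `G` is uniquely
determined by `g`. -/
theorem heat_equation_uniqueness (g : ℝ → ℂ) (G : ℝ → ℝ → ℂ)
    (hg : ContDiff ℝ (⊤ : ℕ∞) g) (hgper : Function.Periodic g (2 * π))
    (hcont : ContinuousOn (fun p : ℝ × ℝ => G p.1 p.2) (Set.univ ×ˢ Set.Ici 0))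
    (hsmoothx : ∀ t : ℝ, 0 < t → ContDiff ℝ (⊤ : ℕ∞) (fun x => G x t))
    (hsmooth : ContDiffOn ℝ (⊤ : ℕ∞) (fun p : ℝ × ℝ => G p.1 p.2) (Set.univ ×ˢ Set.Ioi 0))
    (hper : ∀ t : ℝ, 0 ≤ t → Function.Periodic (fun x => G x t) (2 * π))
    (hheat : ∀ (x t : ℝ), 0 < t →
      HasDerivAt (fun s => G x s) (iteratedDeriv 2 (fun y => G y t) x) t)
    (hinit : ∀ x : ℝ, G x 0 = g x) :
    ∀ (m : ℤ) (t : ℝ), 0 ≤ t →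
      fourierCoeffPi (fun x => G x t) m =
        Complex.exp (-(m : ℂ) ^ 2 * t) * fourierCoeffPi g m := by
  intro m t ht
  -- the exponential character
  set e : ℝ → ℂ := fun x => Complex.exp (-Complex.I * m * x) with he_def
  have he_cont : Continuous e := by
    apply Complex.continuous_exp.comp
    fun_prop
  have he_norm : ∀ x : ℝ, ‖e x‖ = 1 := by
    intro x
    simp [he_def, Complex.norm_exp]
  have he_deriv : ∀ x : ℝ, HasDerivAt e ((-Complex.I * m) * e x) x := by
    intro x
    have h1 : HasDerivAt (fun x : ℝ => -Complex.I * m * x) (-Complex.I * m) x := by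
      simpa using (Complex.ofRealCLM.hasDerivAt (x := x)).const_mul (-Complex.I * m)
    simpa [he_def, mul_comm] using h1.cexp
  have he_per : e π = e (-π) := by
    show Complex.exp (-Complex.I * m * (π:ℝ)) = Complex.exp (-Complex.I * m * ((-π:ℝ)))
    push_cast
    rw [Complex.exp_eq_exp_iff_exists_int]
    exact ⟨-m, by push_cast; ring⟩
  -- continuity of x ↦ G x s for s ≥ 0
  have hGx : ∀ s : ℝ, 0 ≤ s → Continuous (fun x => G x s) := by
    intro s hs
    exact hcont.comp_continuous (continuous_id.prodMk continuous_const)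
      (fun x => ⟨trivial, hs⟩)
  -- the (unnormalized) Fourier coefficient as a function of time
  set F : ℝ → ℂ := fun s => ∫ x in (-π)..π, G x s * e x with hF_def
  -- Step 1 : F is continuous on [0, ∞)
  have hFcont : ContinuousOn F (Set.Ici 0) := by
    intro t0 ht0
    -- bound on a compact neighbourhood
    obtain ⟨C, hC⟩ : ∃ C, ∀ p ∈ (Set.Icc (-π) π ×ˢ Set.Icc (0:ℝ) (t0 + 1)),
        ‖(fun p : ℝ × ℝ => G p.1 p.2) p‖ ≤ C :=
      (isCompact_Icc.prod isCompact_Icc).exists_bound_of_continuousOn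
        (hcont.mono (by intro p hp; exact ⟨trivial, hp.2.1⟩))
    apply intervalIntegral.continuousWithinAt_of_dominated_interval
      (bound := fun _ => C) (μ := MeasureTheory.volume)
    · filter_upwards [self_mem_nhdsWithin] with s hs
      exact ((hGx s hs).mul he_cont).aestronglyMeasurable
    · have hmem : Set.Ici (0:ℝ) ∩ Metric.ball t0 1 ∈ nhdsWithin t0 (Set.Ici 0) :=
        Filter.inter_mem self_mem_nhdsWithin
          (nhdsWithin_le_nhds (Metric.ball_mem_nhds _ one_pos))
      filter_upwards [hmem] with s hs
      apply Filter.Eventually.of_forall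
      intro x hx
      have hx' : x ∈ Set.Icc (-π) π := by
        have : Set.uIoc (-π) π = Set.Ioc (-π) π :=
          Set.uIoc_of_le (by linarith [Real.pi_pos])
        rw [this] at hx
        exact ⟨hx.1.le, hx.2⟩
      have hs2 : s ≤ t0 + 1 := by
        have := Real.dist_eq s t0 ▸ (Metric.mem_ball.1 hs.2)
        have := abs_lt.1 this
        have := ht0
        simp only [Set.mem_Ici] at this
        linarith [abs_lt.1 (Real.dist_eq s t0 ▸ Metric.mem_ball.1 hs.2)]
      calc ‖G x s * e x‖ = ‖G x s‖ * ‖e x‖ := norm_mul _ _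
        _ = ‖G x s‖ := by rw [he_norm x, mul_one]
        _ ≤ C := hC (x, s) ⟨hx', hs.1, hs2⟩
    · exact intervalIntegrable_const
    · apply Filter.Eventually.of_forall
      intro x _
      have : ContinuousWithinAt (fun s => G x s) (Set.Ici 0) t0 := by
        have h1 : ContinuousWithinAt (fun p : ℝ × ℝ => G p.1 p.2)
            (Set.univ ×ˢ Set.Ici 0) (x, t0) := hcont (x, t0) ⟨trivial, ht0⟩
        have h2 : ContinuousWithinAt (fun s : ℝ => ((x, s) : ℝ × ℝ))
            (Set.Ici 0) t0 := (Continuous.continuousWithinAt (by fun_prop))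
        exact h1.comp h2 (fun s hs => ⟨trivial, hs⟩)
      exact this.mul continuousWithinAt_const
  -- Step 2 : derivative of F for t > 0
  have hFderiv : ∀ t0 : ℝ, 0 < t0 → HasDerivAt F ((-(m:ℂ)^2) * F t0) t0 := by
    intro t0 ht0
    set Gj : ℝ × ℝ → ℂ := fun p => G p.1 p.2 with hGj_def
    have hU : IsOpen ((Set.univ : Set ℝ) ×ˢ Set.Ioi (0:ℝ)) :=
      isOpen_univ.prod isOpen_Ioi
    have hdiff : ∀ p ∈ (Set.univ : Set ℝ) ×ˢ Set.Ioi (0:ℝ), DifferentiableAt ℝ Gj p := by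
      intro p hp
      exact (hsmooth.differentiableOn (by simp)).differentiableAt (hU.mem_nhds hp)
    have hfd_cont : ContinuousOn (fderiv ℝ Gj) ((Set.univ : Set ℝ) ×ˢ Set.Ioi (0:ℝ)) :=
      hsmooth.continuousOn_fderiv_of_isOpen hU (by simp)
    -- compact set on which we bound the derivative
    have hKsub : (Set.Icc (-π) π ×ˢ Set.Icc (t0/2) (t0 + t0/2)) ⊆
        (Set.univ : Set ℝ) ×ˢ Set.Ioi (0:ℝ) := by
      intro p hp
      exact ⟨trivial, lt_of_lt_of_le (by linarith) hp.2.1⟩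
    obtain ⟨C, hC⟩ : ∃ C, ∀ p ∈ (Set.Icc (-π) π ×ˢ Set.Icc (t0/2) (t0 + t0/2)),
        ‖fderiv ℝ Gj p‖ ≤ C :=
      (isCompact_Icc.prod isCompact_Icc).exists_bound_of_continuousOn
        (hfd_cont.mono hKsub)
    -- time-derivative of G x · in the ball
    have hkey : ∀ x : ℝ, ∀ s ∈ Metric.ball t0 (t0/2),
        HasDerivAt (fun s => G x s) ((fderiv ℝ Gj (x, s)) (0, 1)) s := by
      intro x s hs
      have hs0 : 0 < s := by
        have := abs_lt.1 (Real.dist_eq s t0 ▸ Metric.mem_ball.1 hs)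
        linarith
      have hdp : DifferentiableAt ℝ Gj (x, s) := hdiff (x, s) ⟨trivial, hs0⟩
      have hcurve : HasDerivAt (fun s : ℝ => ((x, s) : ℝ × ℝ)) ((0 : ℝ), (1 : ℝ)) s :=
        (hasDerivAt_const s x).prodMk (hasDerivAt_id s)
      exact hdp.hasFDerivAt.comp_hasDerivAt s hcurve
    have hball_mem : ∀ s ∈ Metric.ball t0 (t0/2), s ∈ Set.Icc (t0/2) (t0 + t0/2) := by
      intro s hs
      have := abs_lt.1 (Real.dist_eq s t0 ▸ Metric.mem_ball.1 hs)
      constructor <;> linarith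
    have hbound : ∀ x ∈ Set.Icc (-π) π, ∀ s ∈ Metric.ball t0 (t0/2),
        ‖iteratedDeriv 2 (fun y => G y s) x‖ ≤ C := by
      intro x hx s hs
      have hs0 : 0 < s := by
        have := abs_lt.1 (Real.dist_eq s t0 ▸ Metric.mem_ball.1 hs)
        linarith
      have huniq : iteratedDeriv 2 (fun y => G y s) x = (fderiv ℝ Gj (x, s)) (0, 1) :=
        HasDerivAt.unique (hheat x s hs0) (hkey x s hs)
      rw [huniq]
      calc ‖(fderiv ℝ Gj (x, s)) (0, 1)‖ ≤ ‖fderiv ℝ Gj (x, s)‖ * ‖((0:ℝ), (1:ℝ))‖ :=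
            (fderiv ℝ Gj (x, s)).le_opNorm _
        _ = ‖fderiv ℝ Gj (x, s)‖ := by
            simp [Prod.norm_def]
        _ ≤ C := hC (x, s) ⟨hx, hball_mem s hs⟩
    have main := intervalIntegral.hasDerivAt_integral_of_dominated_loc_of_deriv_le
      (F := fun s x => G x s * e x)
      (F' := fun s x => iteratedDeriv 2 (fun y => G y s) x * e x)
      (x₀ := t0) (a := -π) (b := π) (bound := fun _ => C) (μ := MeasureTheory.volume)
      (Metric.ball_mem_nhds t0 (half_pos ht0))
      ?_ ?_ ?_ ?_ ?_ ?_
    · have h2 := main.2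
      have hibp := heatAux_ibp m (fun x => G x t0) (hsmoothx t0 ht0) (hper t0 ht0.le)
      simp only [he_def, hF_def] at h2 ⊢
      rwa [hibp] at h2
    · filter_upwards [isOpen_Ioi.mem_nhds ht0] with s hs
      exact (((hsmoothx s hs).continuous).mul he_cont).aestronglyMeasurable
    · exact (((hsmoothx t0 ht0).continuous).mul he_cont).intervalIntegrable _ _
    · exact ((((hsmoothx t0 ht0).continuous_iteratedDeriv 2 (WithTop.coe_le_coe.2 le_top))).mul
        he_cont).aestronglyMeasurable
    · apply Filter.Eventually.of_forall
      intro x hx s hs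
      have hx' : x ∈ Set.Icc (-π) π := by
        have : Set.uIoc (-π) π = Set.Ioc (-π) π :=
          Set.uIoc_of_le (by linarith [Real.pi_pos])
        rw [this] at hx
        exact ⟨hx.1.le, hx.2⟩
      calc ‖iteratedDeriv 2 (fun y => G y s) x * e x‖
          = ‖iteratedDeriv 2 (fun y => G y s) x‖ * ‖e x‖ := norm_mul _ _
        _ = ‖iteratedDeriv 2 (fun y => G y s) x‖ := by rw [he_norm x, mul_one]
        _ ≤ C := hbound x hx' s hs
    · exact intervalIntegrable_const
    · apply Filter.Eventually.of_forall
      intro x _ s hs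
      have hs0 : 0 < s := by
        have := abs_lt.1 (Real.dist_eq s t0 ▸ Metric.mem_ball.1 hs)
        linarith
      exact (hheat x s hs0).mul_const (e x)
  -- Step 3 : F s = exp(-m² s) * F 0 for s ≥ 0
  have key : ∀ s : ℝ, 0 ≤ s → F s = Complex.exp (-(m:ℂ)^2 * s) * F 0 := by
    set c : ℂ := (m:ℂ)^2 with hc_def
    set H : ℝ → ℂ := fun s => Complex.exp (c * s) * F s with hH_def
    have hH0 : H 0 = F 0 := by simp [hH_def]
    have hHd : ∀ s : ℝ, 0 < s → HasDerivAt H 0 s := by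
      intro s hs
      have h1 : HasDerivAt (fun s : ℝ => Complex.exp (c * s)) (c * Complex.exp (c * s)) s := by
        have h0 : HasDerivAt (fun s : ℝ => c * (s:ℂ)) c s := by
          simpa using (Complex.ofRealCLM.hasDerivAt (x := s)).const_mul c
        simpa [mul_comm] using h0.cexp
      have h2 := h1.mul (hFderiv s hs)
      exact h2.congr_deriv (by ring)
    have hHcont : ContinuousOn H (Set.Ici 0) := by
      apply ContinuousOn.mul _ hFcont
      exact (Complex.continuous_exp.comp (by fun_prop)).continuousOn
    intro s hs
    rcases eq_or_lt_of_le hs with hseq|hs'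
    · rw [← hseq]
      simp
    · have hconst : ∀ r ∈ Set.Ioc (0:ℝ) s, H s = H r := by
        intro r hr
        have hcont' : ContinuousOn H (Set.Icc r s) := by
          intro x hx
          exact ((hHd x (lt_of_lt_of_le hr.1 hx.1)).continuousAt).continuousWithinAt
        have := constant_of_has_deriv_right_zero hcont'
          (fun x hx => (hHd x (lt_of_lt_of_le hr.1 hx.1)).hasDerivWithinAt)
        exact this s ⟨hr.2, le_refl s⟩
      have hne : (nhdsWithin (0:ℝ) (Set.Ioc 0 s)).NeBot := by
        rw [← mem_closure_iff_nhdsWithin_neBot, closure_Ioc hs'.ne]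
        exact ⟨le_refl 0, hs'.le⟩
      have hlim : Filter.Tendsto H (nhdsWithin 0 (Set.Ioc 0 s)) (nhds (H 0)) :=
        ((hHcont 0 Set.self_mem_Ici).mono (fun x hx => hx.1.le))
      have hlim2 : Filter.Tendsto H (nhdsWithin 0 (Set.Ioc 0 s)) (nhds (H s)) := by
        apply Filter.Tendsto.congr' _ tendsto_const_nhds
        filter_upwards [self_mem_nhdsWithin] with r hr
        exact hconst r hr
      have hHs : H 0 = H s := tendsto_nhds_unique hlim hlim2
      have hFs : F 0 = Complex.exp (c * s) * F s := by rw [hH0.symm, hHs, hH_def]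
      calc F s = (Complex.exp (-(c * s)) * Complex.exp (c * s)) * F s := by
            rw [← Complex.exp_add]; simp
        _ = Complex.exp (-(c * s)) * (Complex.exp (c * s) * F s) := by ring
        _ = Complex.exp (-(c * s)) * F 0 := by rw [← hFs]
        _ = Complex.exp (-(m:ℂ)^2 * s) * F 0 := by rw [hc_def, neg_mul]
  -- conclusion
  have hF0 : F 0 = ∫ x in (-π)..π, g x * e x := by
    rw [hF_def]
    simp only [hinit]
  show (1 / (2 * (π : ℂ))) * F t = Complex.exp (-(m:ℂ)^2 * t) *
      ((1 / (2 * (π : ℂ))) * ∫ x in (-π)..π, g x * e x)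
  rw [key t ht, hF0]
  ring
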